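/- Fix N ≥ 1 and β ≥ 0 with θ = tanh β. The quenched pressure A_N(α,β) = (1/N)·E[ln Z_N(α,β)] is differentiable in α > 1/2 and ∂A_N(α,β)/∂α = ln cosh β + E[(1/N²) Σ_{i,j∈Fin N} ln(1 + θ·ω(σ_iσ_j))] = ln cosh β − Σ_{m=1}^∞ ((−1)^m/m) θ^m ⟨q²_{1,…,m}⟩, where the series converges absolutely and ⟨q²_{1,…,m}⟩ = E[(1/N²) Σ_{i,j} (ω(σ_iσ_j))^m]. -/

import Mathlib

open scoped BigOperators

/-- The set of spin values `{-1, 1}` as a finite subset of `ℝ`. -/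
noncomputable abbrev SpinVal : Finset ℝ := {-1, 1}

/-- Spin configurations on `n` sites: maps `Fin n → ℝ` taking values in `{-1,1}`. -/
abbrev Conf (n : ℕ) := Fin n → SpinVal

/-- Hamiltonian of the diluted ferromagnet for the disorder realization `(k, b)`:
`H(σ) = -Σ_{ν<k} σ_{(bν).1} σ_{(bν).2}`. -/
noncomputable def Hdil {n k : ℕ} (b : Fin k → Fin n × Fin n) (σ : Conf n) : ℝ :=
  - ∑ ν : Fin k, (σ (b ν).1 : ℝ) * (σ (b ν).2 : ℝ)

/-- Partition function of the diluted ferromagnet at inverse temperature `β`. -/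
noncomputable def Zdil (n : ℕ) (β : ℝ) {k : ℕ} (b : Fin k → Fin n × Fin n) : ℝ :=
  ∑ σ : Conf n, Real.exp (-β * Hdil b σ)

/-- Gibbs expectation `ω` of an observable for a fixed disorder realization. -/
noncomputable def gibbs (n : ℕ) (β : ℝ) {k : ℕ} (b : Fin k → Fin n × Fin n)
    (f : Conf n → ℝ) : ℝ :=
  (∑ σ : Conf n, f σ * Real.exp (-β * Hdil b σ)) / Zdil n β b

/-- The Poisson probability mass function with mean `lam`. -/
noncomputable def poissonPMF (lam : ℝ) (k : ℕ) : ℝ :=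
  Real.exp (-lam) * lam ^ k / (Nat.factorial k : ℝ)

/-- Quenched expectation at connectivity `α` on `n` sites: the number of bonds `k` is
Poisson(αn) and the `2k` endpoints are i.i.d. uniform on the `n` sites. -/
noncomputable def quenched (n : ℕ) (α : ℝ)
    (F : (k : ℕ) → (Fin k → Fin n × Fin n) → ℝ) : ℝ :=
  ∑' k : ℕ, poissonPMF (α * n) k *
    ((∑ b : Fin k → Fin n × Fin n, F k b) / ((n : ℝ) ^ 2) ^ k)

/-- Boltzmann weight of the `t`-perturbed (cavity) system with realization
`(k, b, k', l)`: `exp(β Σ_ν σσ + β Σ_μ σ_{l μ})`. -/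
noncomputable def cavWeight (n : ℕ) (β : ℝ) {k k' : ℕ} (b : Fin k → Fin n × Fin n)
    (l : Fin k' → Fin n) (σ : Conf n) : ℝ :=
  Real.exp (β * ∑ ν : Fin k, (σ (b ν).1 : ℝ) * (σ (b ν).2 : ℝ)
    + β * ∑ μ : Fin k', (σ (l μ) : ℝ))

/-- Partition function of the `t`-perturbed (cavity) system. -/
noncomputable def Zcav (n : ℕ) (β : ℝ) {k k' : ℕ} (b : Fin k → Fin n × Fin n)
    (l : Fin k' → Fin n) : ℝ :=
  ∑ σ : Conf n, cavWeight n β b l σ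

/-- Gibbs expectation `ω_t` of the `t`-perturbed (cavity) system at fixed realization. -/
noncomputable def gibbsCav (n : ℕ) (β : ℝ) {k k' : ℕ} (b : Fin k → Fin n × Fin n)
    (l : Fin k' → Fin n) (f : Conf n → ℝ) : ℝ :=
  (∑ σ : Conf n, f σ * cavWeight n β b l σ) / Zcav n β b l

/-- Quenched expectation `E_t` of the `t`-perturbed system at connectivity `αt`:
`k` is Poisson(αt·n), `k'` is Poisson(2·αt·t), and all indices are i.i.d. uniform. -/
noncomputable def quenchedCav (n : ℕ) (αt t : ℝ)
    (F : (k : ℕ) → (Fin k → Fin n × Fin n) → (k' : ℕ) → (Fin k' → Fin n) → ℝ) : ℝ :=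
  ∑' k : ℕ, ∑' k' : ℕ, poissonPMF (αt * n) k * poissonPMF (2 * αt * t) k' *
    ((∑ b : Fin k → Fin n × Fin n, ∑ l : Fin k' → Fin n, F k b k' l) /
      (((n : ℝ) ^ 2) ^ k * (n : ℝ) ^ k'))

/-- The cavity function `Ψ_n(α̃, β; t) = E_t[ln Z_{n,t}] - E[ln Z_n(α̃, β)]`. -/
noncomputable def Psi (n : ℕ) (αt β t : ℝ) : ℝ :=
  quenchedCav n αt t (fun _ b _ l => Real.log (Zcav n β b l))
    - quenched n αt (fun _ b => Real.log (Zdil n β b))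

/-!
Adding a bond `(i, j)` multiplies the partition function by `cosh β (1 + tanh β ω(σ_i σ_j))`,
so the average of `log Z` over `k + 1` uniform bonds exceeds the average over `k` bonds by
`log cosh β + E[(1/N²) Σ_{i,j} log (1 + θ ω(σ_i σ_j))]`. Differentiating the Poisson weights in
`α` turns the `α`-derivative of the quenched expectation into `N` times the expectation of this
increment. The series comes from expanding `log (1 + θ ω)` in powers of `θ ω`, where
`|θ ω| ≤ |tanh β| < 1`, and exchanging it with the quenched expectation, the terms being
dominated by `|θ| ^ m`.
-/

open Finset

instance : Nonempty SpinVal := ⟨⟨1, by simp⟩⟩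

lemma spin_eq_neg_one_or_one (s : SpinVal) : (s : ℝ) = -1 ∨ (s : ℝ) = 1 := by
  have h : (s : ℝ) ∈ ({-1, 1} : Finset ℝ) := s.2
  simp only [mem_insert, mem_singleton] at h
  exact h

lemma abs_spin (s : SpinVal) : |(s : ℝ)| = 1 := by
  rcases spin_eq_neg_one_or_one s with h | h <;> simp [h]

lemma spin_mul_spin_eq_neg_one_or_one (s t : SpinVal) :
    (s : ℝ) * t = -1 ∨ (s : ℝ) * t = 1 := by
  rcases spin_eq_neg_one_or_one s with hs | hs <;>
    rcases spin_eq_neg_one_or_one t with ht | ht <;> simp [hs, ht]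

lemma abs_spin_mul_spin (s t : SpinVal) : |(s : ℝ) * t| = 1 := by
  rw [abs_mul, abs_spin, abs_spin, one_mul]

lemma card_conf (n : ℕ) : Fintype.card (Conf n) = 2 ^ n := by
  rw [Fintype.card_fun, Fintype.card_coe, Fintype.card_fin, card_pair (by norm_num)]

lemma exp_mul_eq_cosh_mul_one_add_tanh_mul (β : ℝ) {s : ℝ} (hs : s = -1 ∨ s = 1) :
    Real.exp (β * s) = Real.cosh β * (1 + Real.tanh β * s) := by
  rw [Real.tanh_eq_sinh_div_cosh, mul_add, mul_one, ← mul_assoc, mul_div_cancel₀ _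
    (Real.cosh_pos β).ne']
  rcases hs with rfl | rfl
  · rw [mul_neg_one, mul_neg_one, ← sub_eq_add_neg, Real.cosh_sub_sinh]
  · rw [mul_one, mul_one, Real.cosh_add_sinh]

lemma abs_Hdil_le {n k : ℕ} (b : Fin k → Fin n × Fin n) (σ : Conf n) : |Hdil b σ| ≤ k := by
  rw [Hdil, abs_neg]
  refine (abs_sum_le_sum_abs _ _).trans ?_
  simp [abs_spin]

lemma Hdil_cons {n k : ℕ} (p : Fin n × Fin n) (b : Fin k → Fin n × Fin n) (σ : Conf n) :
    Hdil (Fin.cons p b) σ = -((σ p.1 : ℝ) * σ p.2) + Hdil b σ := by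
  simp only [Hdil, Fin.sum_univ_succ, Fin.cons_zero, Fin.cons_succ]
  ring

lemma Zdil_pos (n : ℕ) (β : ℝ) {k : ℕ} (b : Fin k → Fin n × Fin n) : 0 < Zdil n β b :=
  sum_pos (fun _ _ => Real.exp_pos _) univ_nonempty

lemma abs_log_Zdil_le (n : ℕ) (β : ℝ) {k : ℕ} (b : Fin k → Fin n × Fin n) :
    |Real.log (Zdil n β b)| ≤ n * Real.log 2 + |β| * k := by
  have hterm : ∀ σ : Conf n, |-β * Hdil b σ| ≤ |β| * k := fun σ => by
    rw [abs_mul, abs_neg]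
    exact mul_le_mul_of_nonneg_left (abs_Hdil_le b σ) (abs_nonneg β)
  have hlog : ∀ x : ℝ, Real.log (2 ^ n * Real.exp x) = n * Real.log 2 + x := fun x => by
    rw [Real.log_mul (by positivity) (Real.exp_pos x).ne', Real.log_pow, Real.log_exp]
  have hupper : Zdil n β b ≤ 2 ^ n * Real.exp (|β| * k) := by
    have := sum_le_card_nsmul univ (fun σ : Conf n => Real.exp (-β * Hdil b σ)) _
      fun σ _ => Real.exp_le_exp.2 (abs_le.1 (hterm σ)).2
    rwa [card_univ, card_conf, nsmul_eq_mul, Nat.cast_pow, Nat.cast_ofNat] at this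
  have hlower : 2 ^ n * Real.exp (-(|β| * k)) ≤ Zdil n β b := by
    have := card_nsmul_le_sum univ (fun σ : Conf n => Real.exp (-β * Hdil b σ)) _
      fun σ _ => Real.exp_le_exp.2 (abs_le.1 (hterm σ)).1
    rwa [card_univ, card_conf, nsmul_eq_mul, Nat.cast_pow, Nat.cast_ofNat] at this
  have hZ := Zdil_pos n β b
  have hlog2 : 0 ≤ n * Real.log 2 := by positivity
  rw [abs_le]
  constructor
  · have := Real.log_le_log (by positivity) hlower
    rw [hlog] at this
    linarith
  · have := Real.log_le_log hZ hupper
    rwa [hlog] at this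

noncomputable def twoPoint (n : ℕ) (β : ℝ) {k : ℕ} (b : Fin k → Fin n × Fin n) (i j : Fin n) :
    ℝ :=
  gibbs n β b (fun σ => (σ i : ℝ) * (σ j : ℝ))

lemma abs_gibbs_le (n : ℕ) (β : ℝ) {k : ℕ} (b : Fin k → Fin n × Fin n) {f : Conf n → ℝ}
    {C : ℝ} (hf : ∀ σ, |f σ| ≤ C) : |gibbs n β b f| ≤ C := by
  have hZ := Zdil_pos n β b
  rw [gibbs, abs_div, abs_of_pos hZ, div_le_iff₀ hZ, Zdil, mul_sum]
  refine (abs_sum_le_sum_abs _ _).trans (sum_le_sum fun σ _ => ?_)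
  rw [abs_mul, Real.abs_exp]
  exact mul_le_mul_of_nonneg_right (hf σ) (Real.exp_pos _).le

lemma abs_twoPoint_le_one (n : ℕ) (β : ℝ) {k : ℕ} (b : Fin k → Fin n × Fin n) (i j : Fin n) :
    |twoPoint n β b i j| ≤ 1 :=
  abs_gibbs_le n β b fun _ => (abs_spin_mul_spin _ _).le

lemma abs_mul_twoPoint_lt_one {θ : ℝ} (hθ : |θ| < 1) (n : ℕ) (β : ℝ) {k : ℕ}
    (b : Fin k → Fin n × Fin n) (i j : Fin n) : |θ * twoPoint n β b i j| < 1 := by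
  rw [abs_mul]
  exact (mul_le_of_le_one_right (abs_nonneg θ) (abs_twoPoint_le_one n β b i j)).trans_lt hθ

lemma Zdil_cons (n : ℕ) (β : ℝ) {k : ℕ} (p : Fin n × Fin n) (b : Fin k → Fin n × Fin n) :
    Zdil n β (Fin.cons p b) =
      Real.cosh β * Zdil n β b * (1 + Real.tanh β * twoPoint n β b p.1 p.2) := by
  have hweight : ∀ σ : Conf n, Real.exp (-β * Hdil (Fin.cons p b) σ) =
      Real.cosh β * ((1 + Real.tanh β * ((σ p.1 : ℝ) * σ p.2)) * Real.exp (-β * Hdil b σ)) := by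
    intro σ
    rw [Hdil_cons, mul_add, neg_mul_neg, Real.exp_add,
      exp_mul_eq_cosh_mul_one_add_tanh_mul β (spin_mul_spin_eq_neg_one_or_one _ _)]
    ring
  have hgibbs : twoPoint n β b p.1 p.2 * Zdil n β b =
      ∑ σ : Conf n, (σ p.1 : ℝ) * σ p.2 * Real.exp (-β * Hdil b σ) :=
    div_mul_cancel₀ _ (Zdil_pos n β b).ne'
  rw [Zdil, Fintype.sum_congr _ _ hweight, ← mul_sum, mul_assoc]
  congr 1
  rw [mul_one_add, mul_left_comm, mul_comm (Zdil n β b), hgibbs, Zdil, mul_sum,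
    ← sum_add_distrib]
  exact sum_congr rfl fun σ _ => by ring

lemma log_Zdil_cons (n : ℕ) (β : ℝ) {k : ℕ} (p : Fin n × Fin n) (b : Fin k → Fin n × Fin n) :
    Real.log (Zdil n β (Fin.cons p b)) = Real.log (Real.cosh β) + Real.log (Zdil n β b) +
      Real.log (1 + Real.tanh β * twoPoint n β b p.1 p.2) := by
  have hpos : 0 < 1 + Real.tanh β * twoPoint n β b p.1 p.2 := by
    linarith [(abs_lt.1 (abs_mul_twoPoint_lt_one (Real.abs_tanh_lt_one β) n β b p.1 p.2)).1]
  rw [Zdil_cons, Real.log_mul (mul_pos (Real.cosh_pos β) (Zdil_pos n β b)).ne' hpos.ne',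
    Real.log_mul (Real.cosh_pos β).ne' (Zdil_pos n β b).ne']

noncomputable def pairAverage (n : ℕ) (f : Fin n → Fin n → ℝ) : ℝ :=
  1 / (n : ℝ) ^ 2 * ∑ i, ∑ j, f i j

/-- `quenched n α F` unfolds to `∑' k, poissonPMF (α * n) k * bondAverage n F k`. -/
noncomputable def bondAverage (n : ℕ) (F : (k : ℕ) → (Fin k → Fin n × Fin n) → ℝ) (k : ℕ) :
    ℝ :=
  (∑ b, F k b) / ((n : ℝ) ^ 2) ^ k

lemma card_bonds (n k : ℕ) : (Fintype.card (Fin k → Fin n × Fin n) : ℝ) = ((n : ℝ) ^ 2) ^ k := by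
  simp [sq]

section Averages

variable {n : ℕ}

lemma abs_pairAverage_le (hn : n ≠ 0) {f : Fin n → Fin n → ℝ} {C : ℝ}
    (hf : ∀ i j, |f i j| ≤ C) : |pairAverage n f| ≤ C := by
  have hn2 : (0 : ℝ) < (n : ℝ) ^ 2 := by positivity
  have hsum : |∑ i, ∑ j, f i j| ≤ (n : ℝ) ^ 2 * C := by
    rw [← Fintype.sum_prod_type']
    refine (abs_sum_le_sum_abs _ _).trans ?_
    simpa [sq] using sum_le_card_nsmul univ (fun p : Fin n × Fin n => |f p.1 p.2|) C
      fun p _ => hf p.1 p.2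
  rw [pairAverage, abs_mul, abs_of_pos (by positivity), one_div, inv_mul_le_iff₀ hn2]
  exact hsum

lemma pairAverage_const_add (hn : n ≠ 0) (a : ℝ) (f : Fin n → Fin n → ℝ) :
    pairAverage n (fun i j => a + f i j) = a + pairAverage n f := by
  simp only [pairAverage, sum_add_distrib, sum_const, card_univ, Fintype.card_fin, nsmul_eq_mul]
  field_simp

lemma pairAverage_const_mul (a : ℝ) (f : Fin n → Fin n → ℝ) :
    pairAverage n (fun i j => a * f i j) = a * pairAverage n f := by
  simp only [pairAverage, ← mul_sum]
  ring

lemma hasSum_pairAverage {f : ℕ → Fin n → Fin n → ℝ} {g : Fin n → Fin n → ℝ}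
    (hf : ∀ i j, HasSum (fun m => f m i j) (g i j)) :
    HasSum (fun m => pairAverage n (f m)) (pairAverage n g) :=
  (hasSum_sum fun i _ => hasSum_sum fun j _ => hf i j).mul_left _

lemma abs_bondAverage_le (hn : n ≠ 0) {F : (k : ℕ) → (Fin k → Fin n × Fin n) → ℝ} {k : ℕ}
    {C : ℝ} (hF : ∀ b, |F k b| ≤ C) : |bondAverage n F k| ≤ C := by
  have hden : (0 : ℝ) < ((n : ℝ) ^ 2) ^ k := by positivity
  rw [bondAverage, abs_div, abs_of_pos hden, div_le_iff₀ hden]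
  refine (abs_sum_le_sum_abs _ _).trans ?_
  have := sum_le_card_nsmul univ (fun b => |F k b|) C fun b _ => hF b
  rwa [card_univ, nsmul_eq_mul, card_bonds, mul_comm] at this

lemma bondAverage_const_add_add (hn : n ≠ 0) (a : ℝ)
    (F G : (k : ℕ) → (Fin k → Fin n × Fin n) → ℝ) (k : ℕ) :
    bondAverage n (fun k b => a + F k b + G k b) k = a + bondAverage n F k + bondAverage n G k := by
  simp only [bondAverage, sum_add_distrib, sum_const, card_univ, nsmul_eq_mul, card_bonds]
  field_simp

lemma bondAverage_succ (F : (k : ℕ) → (Fin k → Fin n × Fin n) → ℝ) (k : ℕ) :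
    bondAverage n F (k + 1) =
      bondAverage n (fun k b => pairAverage n fun i j => F (k + 1) (Fin.cons (i, j) b)) k := by
  simp only [bondAverage, pairAverage, ← mul_sum]
  rw [← (Fin.consEquiv fun _ : Fin (k + 1) => Fin n × Fin n).sum_comp, Fintype.sum_prod_type,
    sum_comm, pow_succ]
  simp only [Fin.consEquiv, Equiv.coe_fn_mk, Fintype.sum_prod_type]
  field_simp

end Averages

section ExpGeneratingFunction

open scoped Nat

variable {c : ℕ → ℝ} {C R : ℝ}

lemma norm_mul_pow_div_factorial_le (hc : ∀ k, |c k| ≤ C * R ^ k) {x r : ℝ} (hx : |x| ≤ r)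
    (k : ℕ) : ‖c k * x ^ k / (k ! : ℝ)‖ ≤ C * ((R * r) ^ k / k !) := by
  have hCR : 0 ≤ C * R ^ k := (abs_nonneg _).trans (hc k)
  have hnum := mul_le_mul (hc k) (pow_le_pow_left₀ (abs_nonneg x) hx k) (by positivity) hCR
  rw [Real.norm_eq_abs, abs_div, abs_mul, abs_pow, Nat.abs_cast, mul_pow, mul_div_assoc',
    ← mul_assoc]
  exact div_le_div_of_nonneg_right hnum (by positivity)

lemma abs_succ_le_mul_mul_pow (hc : ∀ k, |c k| ≤ C * R ^ k) (k : ℕ) :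
    |c (k + 1)| ≤ C * R * R ^ k := by
  rw [mul_assoc, ← pow_succ']
  exact hc (k + 1)

lemma summable_mul_pow_div_factorial (hc : ∀ k, |c k| ≤ C * R ^ k) (x : ℝ) :
    Summable fun k => c k * x ^ k / k ! :=
  .of_norm_bounded ((Real.summable_pow_div_factorial _).mul_left C)
    (norm_mul_pow_div_factorial_le hc le_rfl)

lemma hasDerivAt_tsum_mul_pow_div_factorial (hc : ∀ k, |c k| ≤ C * R ^ k) (x : ℝ) :
    HasDerivAt (fun y => ∑' k, c k * y ^ k / k !) (∑' k, c (k + 1) * x ^ k / k !) x := by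
  have hc' := abs_succ_le_mul_mul_pow hc
  have hterm : ∀ k y, HasDerivAt (fun y => c (k + 1) * y ^ (k + 1) / (k + 1)!)
      (c (k + 1) * y ^ k / k !) y := fun k y => by
    refine (((hasDerivAt_pow (k + 1) y).const_mul (c (k + 1))).div_const _).congr_deriv ?_
    rw [Nat.factorial_succ, Nat.cast_mul]
    field_simp
    push_cast
    ring
  have hsplit : (fun y => ∑' k, c k * y ^ k / k !) =
      fun y => c 0 + ∑' k, c (k + 1) * y ^ (k + 1) / (k + 1)! := funext fun y => by
    rw [(summable_mul_pow_div_factorial hc y).tsum_eq_zero_add]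
    simp
  have hx : x ∈ Metric.ball (0 : ℝ) (|x| + 1) := by simp
  rw [hsplit]
  refine HasDerivAt.const_add _ (hasDerivAt_tsum_of_isPreconnected
    ((Real.summable_pow_div_factorial (R * (|x| + 1))).mul_left (C * R)) Metric.isOpen_ball
    (convex_ball _ _).isPreconnected (fun k y _ => hterm k y) (fun k y hy => ?_) hx ?_ hx)
  · refine norm_mul_pow_div_factorial_le (c := fun k => c (k + 1)) hc' ?_ k
    exact (by simpa using hy : |y| < |x| + 1).le
  · exact (summable_nat_add_iff 1).2 (summable_mul_pow_div_factorial hc x)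

lemma poissonPMF_mul (l : ℝ) (k : ℕ) (a : ℝ) :
    poissonPMF l k * a = Real.exp (-l) * (a * l ^ k / k !) := by
  rw [poissonPMF]
  ring

lemma summable_poissonPMF_mul (hc : ∀ k, |c k| ≤ C * R ^ k) (l : ℝ) :
    Summable fun k => poissonPMF l k * c k := by
  simpa only [poissonPMF_mul] using (summable_mul_pow_div_factorial hc l).mul_left _

/-- The sum is `e^{-l}` times the exponential generating function of `c`, and differentiating
that generating function shifts `c` by one. -/
lemma hasDerivAt_tsum_poissonPMF_mul (hc : ∀ k, |c k| ≤ C * R ^ k) (l : ℝ) :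
    HasDerivAt (fun l => ∑' k, poissonPMF l k * c k)
      (∑' k, poissonPMF l k * (c (k + 1) - c k)) l := by
  have hc' := abs_succ_le_mul_mul_pow hc
  simp only [poissonPMF_mul, tsum_mul_left, sub_mul, sub_div]
  rw [(summable_mul_pow_div_factorial hc' l).tsum_sub (summable_mul_pow_div_factorial hc l)]
  refine ((hasDerivAt_neg l).exp.mul (hasDerivAt_tsum_mul_pow_div_factorial hc l)).congr_deriv ?_
  ring

end ExpGeneratingFunction

lemma hasSum_poissonPMF (l : ℝ) : HasSum (poissonPMF l) 1 := by
  have h := (NormedSpace.expSeries_div_hasSum_exp l).mul_left (Real.exp (-l))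
  rw [← Real.exp_eq_exp_ℝ, ← Real.exp_add, neg_add_cancel, Real.exp_zero] at h
  exact h.congr_fun fun k => by rw [poissonPMF, mul_div_assoc]

section Quenched

variable {n : ℕ} {F : (k : ℕ) → (Fin k → Fin n × Fin n) → ℝ}

lemma hasDerivAt_quenched {C R : ℝ} (hF : ∀ k, |bondAverage n F k| ≤ C * R ^ k) (α : ℝ) :
    HasDerivAt (fun α => quenched n α F)
      ((∑' k, poissonPMF (α * n) k * (bondAverage n F (k + 1) - bondAverage n F k)) * n) α := by
  have h := (hasDerivAt_tsum_poissonPMF_mul hF (α * n)).comp α (hasDerivAt_mul_const (n : ℝ))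
  exact h

lemma quenched_const_mul (a : ℝ) (α : ℝ) :
    quenched n α (fun k b => a * F k b) = a * quenched n α F := by
  rw [quenched, quenched, ← tsum_mul_left]
  congr 1
  ext k
  rw [← mul_sum]
  ring

lemma abs_quenched_le (hn : n ≠ 0) {C : ℝ} (hF : ∀ k b, |F k b| ≤ C) (α : ℝ) :
    |quenched n α F| ≤ C * ∑' k, |poissonPMF (α * n) k| := by
  have hterm : ∀ k, ‖poissonPMF (α * n) k * bondAverage n F k‖ ≤ C * |poissonPMF (α * n) k| :=
    fun k => by
      rw [Real.norm_eq_abs, abs_mul, mul_comm C]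
      exact mul_le_mul_of_nonneg_left (abs_bondAverage_le hn (hF k)) (abs_nonneg _)
  rw [← Real.norm_eq_abs, ← tsum_mul_left]
  exact tsum_of_norm_bounded ((hasSum_poissonPMF _).summable.abs.mul_left C).hasSum hterm

variable {G : ℕ → (k : ℕ) → (Fin k → Fin n × Fin n) → ℝ} {a : ℕ → ℝ}

lemma hasSum_quenched (hn : n ≠ 0) (ha : Summable a) (hG : ∀ j k b, |G j k b| ≤ a j)
    (hGF : ∀ k b, HasSum (fun j => G j k b) (F k b)) (α : ℝ) :
    HasSum (fun j => quenched n α (G j)) (quenched n α F) := by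
  set T : ℕ × ℕ → ℝ := fun p => poissonPMF (α * n) p.2 * bondAverage n (G p.1) p.2
  have hT : Summable T := by
    refine .of_norm_bounded (summable_mul_of_summable_norm (f := a)
      (g := fun k => |poissonPMF (α * n) k|) ha.norm (hasSum_poissonPMF _).summable.abs.norm)
      fun p => ?_
    rw [Real.norm_eq_abs, abs_mul, mul_comm]
    exact mul_le_mul_of_nonneg_right (abs_bondAverage_le hn (hG p.1 p.2)) (abs_nonneg _)
  have hcol : ∀ k, HasSum (fun j => T (j, k)) (poissonPMF (α * n) k * bondAverage n F k) :=
    fun k => ((hasSum_sum fun b _ => hGF k b).div_const _).mul_left _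
  have hsum : quenched n α F = ∑' p, T p :=
    (((Equiv.prodComm ℕ ℕ).hasSum_iff.2 hT.hasSum).prod_fiberwise hcol).tsum_eq
  rw [hsum]
  exact hT.hasSum.prod_fiberwise fun j => (hT.prod_factor j).hasSum

lemma summable_abs_quenched (hn : n ≠ 0) (ha : Summable a) (hG : ∀ j k b, |G j k b| ≤ a j)
    (α : ℝ) : Summable fun j => |quenched n α (G j)| :=
  .of_nonneg_of_le (fun _ => abs_nonneg _) (fun j => abs_quenched_le hn (hG j) α)
    (ha.mul_right _)

end Quenched

lemma abs_log_one_add_le {y t : ℝ} (hy : |y| ≤ t) (ht : t < 1) :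
    |Real.log (1 + y)| ≤ t / (1 - t) := by
  have h := Real.abs_log_sub_add_sum_range_le (x := -y) (by rw [abs_neg]; linarith) 0
  rw [sum_range_zero, zero_add, sub_neg_eq_add, abs_neg, pow_one] at h
  exact h.trans (div_le_div₀ (by linarith [abs_nonneg y]) hy (by linarith) (by linarith))

lemma hasSum_log_one_add {y : ℝ} (hy : |y| < 1) :
    HasSum (fun m : ℕ => -((-1) ^ (m + 1) / ((m : ℝ) + 1)) * y ^ (m + 1)) (Real.log (1 + y)) := by
  have h := (Real.hasSum_pow_div_log_of_abs_lt_one (x := -y) (by rwa [abs_neg])).neg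
  rw [neg_neg, sub_neg_eq_add] at h
  refine h.congr_fun fun m => ?_
  rw [neg_pow]
  ring

section DilutedFerromagnet

variable {n : ℕ}

lemma bondAverage_log_Zdil_succ (hn : n ≠ 0) (β : ℝ) (k : ℕ) :
    bondAverage n (fun _ b => Real.log (Zdil n β b)) (k + 1) =
      Real.log (Real.cosh β) + bondAverage n (fun _ b => Real.log (Zdil n β b)) k +
        bondAverage n (fun _ b => pairAverage n fun i j =>
          Real.log (1 + Real.tanh β * twoPoint n β b i j)) k := by
  rw [bondAverage_succ, ← bondAverage_const_add_add hn]
  simp only [log_Zdil_cons, pairAverage_const_add hn]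

lemma hasDerivAt_quenched_log_Zdil (hn : n ≠ 0) (β α : ℝ) :
    HasDerivAt (fun α => quenched n α (fun _ b => Real.log (Zdil n β b)))
      ((Real.log (Real.cosh β) + quenched n α (fun _ b => pairAverage n fun i j =>
        Real.log (1 + Real.tanh β * twoPoint n β b i j))) * n) α := by
  set θ := Real.tanh β
  have hθ : |θ| < 1 := Real.abs_tanh_lt_one β
  have hgrowth : ∀ k, |bondAverage n (fun _ b => Real.log (Zdil n β b)) k| ≤
      2 ^ n * Real.exp |β| ^ k := fun k => by
    refine abs_bondAverage_le hn fun b => (abs_log_Zdil_le n β b).trans ?_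
    calc (n : ℝ) * Real.log 2 + |β| * k ≤ Real.exp (n * Real.log 2 + |β| * k) := by
          linarith [Real.add_one_le_exp (n * Real.log 2 + |β| * k)]
      _ = 2 ^ n * Real.exp |β| ^ k := by
          rw [Real.exp_add, mul_comm _ (k : ℝ), Real.exp_nat_mul, Real.exp_nat_mul,
            Real.exp_log two_pos]
  have hbounded : ∀ k, |bondAverage n (fun _ b => pairAverage n fun i j =>
      Real.log (1 + θ * twoPoint n β b i j)) k| ≤ |θ| / (1 - |θ|) * 1 ^ k := fun k => by
    rw [one_pow, mul_one]
    exact abs_bondAverage_le hn fun b => abs_pairAverage_le hn fun i j =>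
      abs_log_one_add_le (by simpa [abs_mul] using
        mul_le_of_le_one_right (abs_nonneg θ) (abs_twoPoint_le_one n β b i j)) hθ
  have hdiff : ∀ k, bondAverage n (fun _ b => Real.log (Zdil n β b)) (k + 1) -
      bondAverage n (fun _ b => Real.log (Zdil n β b)) k = Real.log (Real.cosh β) +
        bondAverage n (fun _ b => pairAverage n fun i j =>
          Real.log (1 + θ * twoPoint n β b i j)) k := fun k => by
    rw [bondAverage_log_Zdil_succ hn]
    ring
  refine (hasDerivAt_quenched hgrowth α).congr_deriv ?_
  simp only [hdiff, mul_add]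
  rw [((hasSum_poissonPMF _).mul_right _).summable.tsum_add
    (summable_poissonPMF_mul hbounded _), tsum_mul_right, (hasSum_poissonPMF _).tsum_eq, one_mul]
  rfl

noncomputable def logSeriesTerm (n : ℕ) (β θ : ℝ) (m : ℕ) {k : ℕ} (b : Fin k → Fin n × Fin n) :
    ℝ :=
  -((-1) ^ (m + 1) / ((m : ℝ) + 1) * θ ^ (m + 1)) *
    pairAverage n fun i j => twoPoint n β b i j ^ (m + 1)

lemma abs_logSeriesTerm_le (hn : n ≠ 0) (β θ : ℝ) (m : ℕ) {k : ℕ}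
    (b : Fin k → Fin n × Fin n) : |logSeriesTerm n β θ m b| ≤ |θ| ^ (m + 1) := by
  have hcoeff : |(-1 : ℝ) ^ (m + 1) / ((m : ℝ) + 1)| ≤ 1 := by
    rw [abs_div, abs_pow, abs_neg, abs_one, one_pow, abs_of_pos (by positivity)]
    exact div_le_one_of_le₀ (by simp) (by positivity)
  have hpair : |pairAverage n fun i j => twoPoint n β b i j ^ (m + 1)| ≤ 1 :=
    abs_pairAverage_le hn fun i j => by
      rw [abs_pow]
      exact pow_le_one₀ (abs_nonneg _) (abs_twoPoint_le_one n β b i j)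
  rw [logSeriesTerm, abs_mul, abs_neg, abs_mul, abs_pow]
  calc _ ≤ 1 * |θ| ^ (m + 1) * 1 := by gcongr
    _ = |θ| ^ (m + 1) := by ring

lemma hasSum_logSeriesTerm (β : ℝ) {θ : ℝ} (hθ : |θ| < 1) {k : ℕ}
    (b : Fin k → Fin n × Fin n) :
    HasSum (fun m => logSeriesTerm n β θ m b)
      (pairAverage n fun i j => Real.log (1 + θ * twoPoint n β b i j)) := by
  refine (hasSum_pairAverage fun i j =>
    hasSum_log_one_add (abs_mul_twoPoint_lt_one hθ n β b i j)).congr_fun fun m => ?_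
  rw [logSeriesTerm, ← pairAverage_const_mul]
  congr 1
  ext i j
  ring

end DilutedFerromagnet

theorem pressure_hasDerivAt_alpha_general (N : ℕ) (hN : 1 ≤ N) (β : ℝ)
    (θ : ℝ) (hθ : θ = Real.tanh β) (α : ℝ)
    (q : ℕ → ℝ)
    (hq : ∀ m : ℕ, q m = quenched N α (fun _ b =>
      (1 / (N : ℝ) ^ 2) * ∑ i : Fin N, ∑ j : Fin N,
        (gibbs N β b (fun σ => (σ i : ℝ) * (σ j : ℝ))) ^ m)) :
    HasDerivAt (fun α' : ℝ =>
        (1 / (N : ℝ)) * quenched N α' (fun _ b => Real.log (Zdil N β b)))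
      (Real.log (Real.cosh β) + quenched N α (fun _ b =>
        (1 / (N : ℝ) ^ 2) * ∑ i : Fin N, ∑ j : Fin N,
          Real.log (1 + θ * gibbs N β b (fun σ => (σ i : ℝ) * (σ j : ℝ)))))
      α ∧
    Summable (fun j : ℕ =>
        |((-1 : ℝ) ^ (j + 1) / ((j : ℝ) + 1)) * θ ^ (j + 1) * q (j + 1)|) ∧
    Real.log (Real.cosh β) + quenched N α (fun _ b =>
        (1 / (N : ℝ) ^ 2) * ∑ i : Fin N, ∑ j : Fin N,
          Real.log (1 + θ * gibbs N β b (fun σ => (σ i : ℝ) * (σ j : ℝ))))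
      = Real.log (Real.cosh β)
        - ∑' j : ℕ, ((-1 : ℝ) ^ (j + 1) / ((j : ℝ) + 1)) * θ ^ (j + 1) * q (j + 1) := by
  subst hθ
  have hn : N ≠ 0 := Nat.one_le_iff_ne_zero.1 hN
  have hθ : |Real.tanh β| < 1 := Real.abs_tanh_lt_one β
  have hgeom : Summable fun m => |Real.tanh β| ^ (m + 1) :=
    (summable_nat_add_iff 1).2 (summable_geometric_of_lt_one (abs_nonneg _) hθ)
  have hterm : ∀ m, quenched N α (fun _ b => logSeriesTerm N β (Real.tanh β) m b) =
      -((-1 : ℝ) ^ (m + 1) / ((m : ℝ) + 1) * Real.tanh β ^ (m + 1) * q (m + 1)) := fun m => by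
    rw [hq, ← neg_mul]
    exact quenched_const_mul _ α
  have hseries := hasSum_quenched hn hgeom (fun m _ b => abs_logSeriesTerm_le hn β _ m b)
    (fun _ b => hasSum_logSeriesTerm β hθ b) α
  refine ⟨?_, ?_, ?_⟩
  · refine ((hasDerivAt_quenched_log_Zdil hn β α).const_mul (1 / (N : ℝ))).congr_deriv ?_
    rw [one_div_mul_eq_div, mul_div_cancel_right₀ _ (Nat.cast_ne_zero.2 hn)]
    rfl
  · simpa only [hterm, abs_neg] using
      summable_abs_quenched hn hgeom (fun m _ b => abs_logSeriesTerm_le hn β _ m b) α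
  · have h := hseries.tsum_eq
    rw [tsum_congr hterm, tsum_neg] at h
    change _ + quenched N α (fun _ b => pairAverage N fun i j =>
      Real.log (1 + Real.tanh β * twoPoint N β b i j)) = _
    rw [← h, sub_eq_add_neg]

/-- **`α`-derivative of the quenched pressure (finite `N`, exact form).** With
`θ = tanh β`, the quenched pressure `A_N(α,β) = (1/N)·E[ln Z_N(α,β)]` is differentiable
in `α > 1/2` with
`∂A_N/∂α = ln cosh β + E[(1/N²) Σ_{i,j} ln(1 + θ·ω(σ_iσ_j))]
        = ln cosh β − Σ_{m≥1} ((-1)^m/m) θ^m ⟨q²_{1,…,m}⟩`,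
where the series converges absolutely and
`⟨q²_{1,…,m}⟩ = E[(1/N²) Σ_{i,j} (ω(σ_iσ_j))^m]` (the series below being indexed by
`m = j + 1`). -/
theorem pressure_hasDerivAt_alpha (N : ℕ) (hN : 1 ≤ N) (β : ℝ) (hβ : 0 ≤ β)
    (θ : ℝ) (hθ : θ = Real.tanh β) (α : ℝ) (hα : 1 / 2 < α)
    (q : ℕ → ℝ)
    (hq : ∀ m : ℕ, q m = quenched N α (fun _ b =>
      (1 / (N : ℝ) ^ 2) * ∑ i : Fin N, ∑ j : Fin N,
        (gibbs N β b (fun σ => (σ i : ℝ) * (σ j : ℝ))) ^ m)) :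
    HasDerivAt (fun α' : ℝ =>
        (1 / (N : ℝ)) * quenched N α' (fun _ b => Real.log (Zdil N β b)))
      (Real.log (Real.cosh β) + quenched N α (fun _ b =>
        (1 / (N : ℝ) ^ 2) * ∑ i : Fin N, ∑ j : Fin N,
          Real.log (1 + θ * gibbs N β b (fun σ => (σ i : ℝ) * (σ j : ℝ)))))
      α ∧
    Summable (fun j : ℕ =>
        |((-1 : ℝ) ^ (j + 1) / ((j : ℝ) + 1)) * θ ^ (j + 1) * q (j + 1)|) ∧
    Real.log (Real.cosh β) + quenched N α (fun _ b =>
        (1 / (N : ℝ) ^ 2) * ∑ i : Fin N, ∑ j : Fin N,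
          Real.log (1 + θ * gibbs N β b (fun σ => (σ i : ℝ) * (σ j : ℝ))))
      = Real.log (Real.cosh β)
        - ∑' j : ℕ, ((-1 : ℝ) ^ (j + 1) / ((j : ℝ) + 1)) * θ ^ (j + 1) * q (j + 1) :=
  pressure_hasDerivAt_alpha_general N hN β θ hθ α q hq
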